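/- Let |c⟩ = ½(|00⟩ + |01⟩ + |10⟩ + |11⟩) in ℂ² ⊗ ℂ². Then for every standard basis vector |s⟩ ∈ {|00⟩, |01⟩, |10⟩, |11⟩}, one has −U_{|c⟩} U_{|s⟩} |c⟩ = |s⟩. -/
import Mathlib
open scoped ComplexConjugate
open Finset
noncomputable section
def e (s : Fin 2 × Fin 2) : Fin 2 × Fin 2 → ℂ := fun p => if p = s then 1 else 0
def inner2 (u v : Fin 2 × Fin 2 → ℂ) : ℂ := ∑ p, conj (u p) * v p
def grover (x v : Fin 2 × Fin 2 → ℂ) : Fin 2 × Fin 2 → ℂ :=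
  v - (2 * inner2 x v) • x
def cState : Fin 2 × Fin 2 → ℂ := fun _ => 1 / 2
lemma inner2_e_c (s : Fin 2 × Fin 2) : inner2 (e s) cState = 1 / 2 := by
  unfold inner2 e cState
  rw [Fintype.sum_eq_single s (by intro x hx; simp [hx])]
  simp
lemma inner2_c_e (s : Fin 2 × Fin 2) : inner2 cState (e s) = 1 / 2 := by
  unfold inner2 e cState
  rw [Fintype.sum_eq_single s (by intro x hx; simp [hx])]
  simp
  norm_num [Complex.ext_iff]
lemma inner2_c_c : inner2 cState cState = 1 := by
  unfold inner2 cState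
  have : ∀ p : Fin 2 × Fin 2, (starRingEnd ℂ) (1/2) * (1/2) = (1/4 : ℂ) := by
    intro; norm_num [Complex.ext_iff]
  rw [Finset.sum_congr rfl (fun p _ => this p)]
  simp
/-- Grover identity: `−U_{|c⟩} U_{|s⟩} |c⟩ = |s⟩` for every standard basis vector `|s⟩`. -/
theorem grover_identity (s : Fin 2 × Fin 2) :
    -(grover cState (grover (e s) cState)) = e s := by
  have h1 : grover (e s) cState = cState - e s := by
    unfold grover; rw [inner2_e_c]; norm_num
  rw [h1]
  unfold grover
  have h2 : inner2 cState (cState - e s) = 1 / 2 := by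
    unfold inner2 at *
    simp only [Pi.sub_apply, map_sub, sub_mul, mul_sub, Finset.sum_sub_distrib]
    have := inner2_c_c
    have := inner2_c_e s
    unfold inner2 at *
    rw [this, ‹∑ p, conj (cState p) * cState p = 1›]
    norm_num
  rw [h2]
  funext p
  simp only [Pi.neg_apply, Pi.sub_apply, Pi.smul_apply, smul_eq_mul, cState]
  ring
end
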